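/- arXiv:1711.07006 — 3 statements merged into one kernel-verified Lean document; each statement's English description precedes it below -/
import Mathlib

section
/- For d = 2 there exist positive constants C, C', c, c' such that for all 0 < r ≤ δ: C'·(1 + |log(δ/r)|)·exp(-c'·r²/δ²) ≤ ∫₀^{δ²} t^{-1}·exp(-r²/(4t)) dt ≤ C·(1 + |log(δ/r)|)·exp(-c·r²/δ²). -/
open MeasureTheory Real Set intervalIntegral

/-!
Write `a = r²/4`. The integrand `t⁻¹ e^{-a/t}` is at most `a⁻¹` (as `x e^{-x} ≤ 1`) and at most `t⁻¹`,
and it is at least `e⁻¹ t⁻¹` for `t ≥ a`. Splitting `(0, δ²]` at `a` therefore squeezes the integral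
between `e⁻¹ log (δ²/a)` and `1 + log (δ²/a)`, and `log (δ²/a) = log 4 + 2 log (δ/r)`.
Since `r ≤ δ`, the Gaussian factor `e^{-r²/δ²}` only ranges over `[e⁻¹, 1]`.
-/

section HeatTimeIntegral

variable {a b t : ℝ}

lemma inv_mul_exp_neg_div_le_inv_numerator (ha : 0 < a) (ht : 0 < t) : t⁻¹ * exp (-a / t) ≤ a⁻¹ := by
  have hx : a / t ≤ exp (a / t) := by linarith [add_one_le_exp (a / t)]
  calc t⁻¹ * exp (-a / t) = a⁻¹ * (a / t / exp (a / t)) := by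
        rw [neg_div, exp_neg]; field_simp
    _ ≤ a⁻¹ * 1 := by gcongr; exact div_le_one_of_le₀ hx (by positivity)
    _ = a⁻¹ := mul_one _

lemma inv_mul_exp_neg_div_le_inv (ha : 0 ≤ a) (ht : 0 < t) : t⁻¹ * exp (-a / t) ≤ t⁻¹ :=
  mul_le_of_le_one_right (inv_nonneg.2 ht.le) <|
    exp_le_one_iff.2 <| div_nonpos_of_nonpos_of_nonneg (neg_nonpos.2 ha) ht.le

lemma exp_neg_one_mul_inv_le (ha : 0 < a) (hat : a ≤ t) : exp (-1) * t⁻¹ ≤ t⁻¹ * exp (-a / t) := by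
  rw [mul_comm]
  refine mul_le_mul_of_nonneg_left (exp_le_exp.2 ?_) (inv_nonneg.2 (ha.trans_le hat).le)
  rw [neg_div, neg_le_neg_iff]
  exact div_le_one_of_le₀ hat (ha.trans_le hat).le

lemma intervalIntegrable_inv_mul_exp_neg_div {x y : ℝ} (ha : 0 < a) (hx : 0 ≤ x) (hy : 0 ≤ y) :
    IntervalIntegrable (fun t ↦ t⁻¹ * exp (-a / t)) volume x y := by
  rw [intervalIntegrable_iff]
  refine IntegrableOn.of_bound measure_Ioc_lt_top (by fun_prop) a⁻¹ ?_
  filter_upwards [ae_restrict_mem measurableSet_Ioc] with t ht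
  have ht : 0 < t := (le_min hx hy).trans_lt ht.1
  rw [norm_of_nonneg (mul_nonneg (inv_nonneg.2 ht.le) (exp_pos _).le)]
  exact inv_mul_exp_neg_div_le_inv_numerator ha ht

lemma integral_inv_mul_exp_neg_div_le (ha : 0 < a) (hab : a ≤ b) :
    ∫ t in 0..b, t⁻¹ * exp (-a / t) ≤ 1 + log (b / a) := by
  have hint_left := intervalIntegrable_inv_mul_exp_neg_div ha le_rfl ha.le
  have hint_right := intervalIntegrable_inv_mul_exp_neg_div ha ha.le (ha.le.trans hab)
  have hnear : ∫ t in 0..a, t⁻¹ * exp (-a / t) ≤ 1 := by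
    calc ∫ t in 0..a, t⁻¹ * exp (-a / t) ≤ ∫ _ in 0..a, a⁻¹ :=
          integral_mono_on_of_le_Ioo ha.le hint_left intervalIntegrable_const
            fun t ht ↦ inv_mul_exp_neg_div_le_inv_numerator ha ht.1
      _ = 1 := by simp [ha.ne']
  have hfar : ∫ t in a..b, t⁻¹ * exp (-a / t) ≤ log (b / a) := by
    calc ∫ t in a..b, t⁻¹ * exp (-a / t) ≤ ∫ t in a..b, t⁻¹ :=
          integral_mono_on hab hint_right (intervalIntegrable_inv_iff.2 <| .inr <|
            notMem_uIcc_of_lt ha (ha.trans_le hab))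
            fun t ht ↦ inv_mul_exp_neg_div_le_inv ha.le (ha.trans_le ht.1)
      _ = log (b / a) := integral_inv_of_pos ha (ha.trans_le hab)
  rw [← integral_add_adjacent_intervals hint_left hint_right]
  linarith

lemma exp_neg_one_mul_log_le_integral_inv_mul_exp_neg_div (ha : 0 < a) (hab : a ≤ b) :
    exp (-1) * log (b / a) ≤ ∫ t in 0..b, t⁻¹ * exp (-a / t) := by
  have hinv : IntervalIntegrable (fun t : ℝ ↦ exp (-1) * t⁻¹) volume a b :=
    (intervalIntegrable_inv_iff.2 <| .inr <| notMem_uIcc_of_lt ha (ha.trans_le hab)).const_mul _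
  calc exp (-1) * log (b / a) = ∫ t in a..b, exp (-1) * t⁻¹ := by
        rw [intervalIntegral.integral_const_mul, integral_inv_of_pos ha (ha.trans_le hab)]
    _ ≤ ∫ t in a..b, t⁻¹ * exp (-a / t) :=
        integral_mono_on hab hinv (intervalIntegrable_inv_mul_exp_neg_div ha ha.le (ha.le.trans hab))
          fun t ht ↦ exp_neg_one_mul_inv_le ha ht.1
    _ ≤ ∫ t in 0..b, t⁻¹ * exp (-a / t) := by
        refine integral_mono_interval ha.le hab le_rfl ?_
          (intervalIntegrable_inv_mul_exp_neg_div ha le_rfl (ha.le.trans hab))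
        filter_upwards [ae_restrict_mem measurableSet_Ioc] with t ht
        exact mul_nonneg (inv_nonneg.2 ht.1.le) (exp_pos _).le

end HeatTimeIntegral

lemma one_le_log_four : 1 ≤ log 4 := by
  rw [show (4 : ℝ) = 2 ^ 2 by norm_num, log_pow]
  push_cast
  linarith [log_two_gt_d9]

lemma log_four_le_three : log 4 ≤ 3 := by
  linarith [log_le_sub_one_of_pos (show (0 : ℝ) < 4 by norm_num)]

lemma log_sq_div_quarter_sq {r δ : ℝ} (hr : 0 < r) (hδ : 0 < δ) :
    log (δ ^ 2 / (r ^ 2 / 4)) = log 4 + 2 * log (δ / r) := by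
  rw [show δ ^ 2 / (r ^ 2 / 4) = 4 * (δ / r) ^ 2 by field_simp,
    log_mul (by norm_num) (by positivity), log_pow]
  push_cast
  ring

/-- Two-sided estimate for the time-truncated heat kernel integral in dimension `d = 2`:
for `0 < r ≤ δ`,
`C'(1+|log(δ/r)|)e^{-c' r²/δ²} ≤ ∫₀^{δ²} t^{-1} e^{-r²/(4t)} dt ≤ C(1+|log(δ/r)|)e^{-c r²/δ²}`. -/
theorem heat_time_integral_estimate_dim_two :
    ∃ C C' c c' : ℝ, 0 < C ∧ 0 < C' ∧ 0 < c ∧ 0 < c' ∧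
      ∀ r δ : ℝ, 0 < r → r ≤ δ →
        (C' * (1 + |Real.log (δ / r)|) * Real.exp (-c' * r ^ 2 / δ ^ 2)
            ≤ ∫ t in Set.Ioc (0:ℝ) (δ ^ 2), t⁻¹ * Real.exp (-r ^ 2 / (4 * t))) ∧
        (∫ t in Set.Ioc (0:ℝ) (δ ^ 2), t⁻¹ * Real.exp (-r ^ 2 / (4 * t)))
            ≤ C * (1 + |Real.log (δ / r)|) * Real.exp (-c * r ^ 2 / δ ^ 2) := by
  refine ⟨4 * exp 1, exp (-1), 1, 1, by positivity, by positivity, one_pos, one_pos,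
    fun r δ hr hrδ ↦ ?_⟩
  have hδ : 0 < δ := hr.trans_le hrδ
  have hL : 0 ≤ log (δ / r) := log_nonneg ((one_le_div hr).2 hrδ)
  have hquarter : r ^ 2 / 4 ≤ δ ^ 2 := by nlinarith
  have hratio : r ^ 2 / δ ^ 2 ≤ 1 := div_le_one_of_le₀ (by nlinarith) (by positivity)
  have hintegral : ∫ t in Ioc 0 (δ ^ 2), t⁻¹ * exp (-r ^ 2 / (4 * t))
      = ∫ t in 0..δ ^ 2, t⁻¹ * exp (-(r ^ 2 / 4) / t) := by
    rw [integral_of_le (by positivity)]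
    congr with t
    ring_nf
  have hlog := log_sq_div_quarter_sq hr hδ
  rw [abs_of_nonneg hL, hintegral]
  constructor
  · calc exp (-1) * (1 + log (δ / r)) * exp (-1 * r ^ 2 / δ ^ 2)
        ≤ exp (-1) * (1 + log (δ / r)) :=
          mul_le_of_le_one_right (by positivity) (exp_le_one_iff.2 (by
            rw [neg_one_mul, neg_div]; exact neg_nonpos.2 (by positivity)))
      _ ≤ exp (-1) * log (δ ^ 2 / (r ^ 2 / 4)) := by
          rw [hlog]
          exact mul_le_mul_of_nonneg_left (by linarith [one_le_log_four]) (exp_pos _).le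
      _ ≤ _ := exp_neg_one_mul_log_le_integral_inv_mul_exp_neg_div (by positivity) hquarter
  · have hgauss : 1 ≤ exp 1 * exp (-1 * r ^ 2 / δ ^ 2) := by
      rw [← exp_add]
      exact one_le_exp (by rw [neg_one_mul, neg_div]; linarith)
    calc _ ≤ 1 + log (δ ^ 2 / (r ^ 2 / 4)) :=
          integral_inv_mul_exp_neg_div_le (by positivity) hquarter
      _ ≤ 4 * (1 + log (δ / r)) := by rw [hlog]; linarith [log_four_le_three]
      _ ≤ 4 * (1 + log (δ / r)) * (exp 1 * exp (-1 * r ^ 2 / δ ^ 2)) :=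
          le_mul_of_one_le_right (by positivity) hgauss
      _ = 4 * exp 1 * (1 + log (δ / r)) * exp (-1 * r ^ 2 / δ ^ 2) := by ring
end

section
/- Let (X_t) be standard Brownian motion in ℝ^d (d > 2) started at x, let K ⊂ B(x,1) be compact satisfying the two-sided Minkowski regularity conditions with exponent α ∈ (d-2, d), and set K'_n = K_{a^n} \ K_{a^{n+1}} for a suitable constant a ∈ (0,1), Z_n = ∫₀^{δ²} 1_{K'_n}(X_s) ds with x ∈ K. Then there is a constant C > 0 independent of n and δ such that for all n with a^n ≤ δ² ≤ 1: E(Z_n) ≥ C·a^{n(d-α)}·δ^{2-d+α}. -/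
open MeasureTheory Metric ProbabilityTheory

/-- The Gaussian heat kernel `p_t(x,y) = (4πt)^{-d/2} exp(-|x-y|²/(4t))` on `ℝ^d`. -/
noncomputable def heatKernel (d : ℕ) (t : ℝ) (x y : EuclideanSpace ℝ (Fin d)) : ℝ :=
  (4 * Real.pi * t) ^ (-(d : ℝ) / 2) * Real.exp (-(dist x y) ^ 2 / (4 * t))

/-- `X` is a standard Brownian motion in `ℝ^d` under `P`, started at `x₀`. -/
structure IsBrownianMotion {Ω : Type*} [MeasurableSpace Ω] (P : Measure Ω) (d : ℕ)
    (X : ℝ → Ω → EuclideanSpace ℝ (Fin d)) (x₀ : EuclideanSpace ℝ (Fin d)) : Prop where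
  isProb : IsProbabilityMeasure P
  meas : Measurable fun p : ℝ × Ω => X p.1 p.2
  start : ∀ᵐ ω ∂P, X 0 ω = x₀
  cont : ∀ᵐ ω ∂P, Continuous fun t => X t ω
  incr : ∀ s t : ℝ, 0 ≤ s → s < t →
    ∀ A : Set (EuclideanSpace ℝ (Fin d)), MeasurableSet A →
      (P {ω | X t ω - X s ω ∈ A}).toReal = ∫ y in A, heatKernel d (t - s) 0 y
  indep : ∀ (n : ℕ) (u : ℕ → ℝ), Monotone u → 0 ≤ u 0 →
    iIndepFun
      (fun i : Fin n => fun ω => X (u (i + 1)) ω - X (u (i : ℕ)) ω) P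

/-!
For `δ²/2 < s ≤ δ²` the heat kernel `p_s(x, ·)` is at least `e^{-1/2} (4πδ²)^{-d/2}` on
`B(x, δ)`, so `P(X_s ∈ K'_n) ≥ e^{-1/2} (4πδ²)^{-d/2} |K'_n ∩ B(x, δ)|`. The two regularity
conditions at scale `r = δ` bound the volume of the shell from below:
`|K'_n ∩ B(x, δ)| ≥ (C₂ - C₁ a^{d-α}) δ^α a^{n(d-α)} ≥ (C₂/2) δ^α a^{n(d-α)}`.
Integrating over `s ∈ (δ²/2, δ²]` and exchanging the two integrals gives
`E Z_n ≥ (δ²/2) e^{-1/2} (4πδ²)^{-d/2} (C₂/2) δ^α a^{n(d-α)}`.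
-/

open Real Set

section MinkowskiRegular

variable {E : Type*} [PseudoMetricSpace E] [MeasureSpace E]

def IsUpperMinkowskiRegular (D α C : ℝ) (K : Set E) : Prop :=
  ∀ (y : E) (r γ : ℝ), 0 < γ → γ ≤ r → r ≤ 1 →
    volume (cthickening γ K ∩ closedBall y r) ≤ ENNReal.ofReal (C * r ^ α * γ ^ (D - α))

def IsLowerMinkowskiRegular (D α C : ℝ) (K : Set E) : Prop :=
  ∀ (y : E) (r γ : ℝ), 0 < γ → γ ≤ r → r ≤ 1 → y ∈ cthickening (r / 2) K →
    ENNReal.ofReal (C * r ^ α * γ ^ (D - α)) ≤ volume (cthickening γ K ∩ closedBall y r)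

theorem IsLowerMinkowskiRegular.ofReal_le_volume_shell_inter_closedBall {D α C₁ C₂ a : ℝ}
    {K : Set E} (hlower : IsLowerMinkowskiRegular D α C₂ K)
    (hupper : IsUpperMinkowskiRegular D α C₁ K) (hC₁ : 0 ≤ C₁) (ha0 : 0 < a) (ha1 : a ≤ 1)
    (haC : C₁ * a ^ (D - α) ≤ C₂ / 2) {y : E} {r γ : ℝ} (hγ : 0 < γ) (hγr : γ ≤ r)
    (hr : r ≤ 1) (hy : y ∈ cthickening (r / 2) K) :
    ENNReal.ofReal (C₂ / 2 * r ^ α * γ ^ (D - α)) ≤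
      volume ((cthickening γ K \ cthickening (a * γ) K) ∩ closedBall y r) := by
  have hr0 : 0 < r := hγ.trans_le hγr
  have haγ : a * γ ≤ γ := mul_le_of_le_one_left hγ.le ha1
  have hinner : C₁ * r ^ α * (a * γ) ^ (D - α) ≤ C₂ / 2 * r ^ α * γ ^ (D - α) := by
    rw [mul_rpow ha0.le hγ.le]
    calc C₁ * r ^ α * (a ^ (D - α) * γ ^ (D - α))
        = C₁ * a ^ (D - α) * (r ^ α * γ ^ (D - α)) := by ring
      _ ≤ C₂ / 2 * (r ^ α * γ ^ (D - α)) := by gcongr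
      _ = C₂ / 2 * r ^ α * γ ^ (D - α) := by ring
  have hsplit : (cthickening γ K \ cthickening (a * γ) K) ∩ closedBall y r =
      (cthickening γ K ∩ closedBall y r) \ (cthickening (a * γ) K ∩ closedBall y r) := by
    ext; simp only [mem_inter_iff, mem_sdiff]; tauto
  calc ENNReal.ofReal (C₂ / 2 * r ^ α * γ ^ (D - α))
      ≤ ENNReal.ofReal (C₂ * r ^ α * γ ^ (D - α) - C₁ * r ^ α * (a * γ) ^ (D - α)) :=
        ENNReal.ofReal_le_ofReal (by linarith)
    _ = ENNReal.ofReal (C₂ * r ^ α * γ ^ (D - α)) -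
          ENNReal.ofReal (C₁ * r ^ α * (a * γ) ^ (D - α)) :=
        ENNReal.ofReal_sub _ (by positivity)
    _ ≤ volume (cthickening γ K ∩ closedBall y r) -
          volume (cthickening (a * γ) K ∩ closedBall y r) :=
        tsub_le_tsub (hlower y r γ hγ hγr hr hy)
          (hupper y r (a * γ) (mul_pos ha0 hγ) (haγ.trans hγr) hr)
    _ ≤ _ := hsplit ▸ le_measure_sdiff

end MinkowskiRegular

theorem mul_sq_rpow_neg_div_two {c r : ℝ} (hc : 0 ≤ c) (hr : 0 < r) (D : ℝ) :
    (c * r ^ 2) ^ (-D / 2) = c ^ (-D / 2) * r ^ (-D) := by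
  rw [mul_rpow hc (by positivity), ← rpow_natCast r 2, ← rpow_mul hr.le]
  push_cast
  ring_nf

theorem continuous_heatKernel (d : ℕ) (t : ℝ) (x : EuclideanSpace ℝ (Fin d)) :
    Continuous (heatKernel d t x) := by
  unfold heatKernel
  fun_prop

theorem exp_neg_half_mul_le_heatKernel {d : ℕ} {r t : ℝ} {x y : EuclideanSpace ℝ (Fin d)}
    (ht : 0 < t) (hxy : dist x y ≤ r) (hrt : r ^ 2 ≤ 2 * t) (htr : t ≤ r ^ 2) :
    exp (-(1 / 2)) * (4 * π * r ^ 2) ^ (-(d : ℝ) / 2) ≤ heatKernel d t x y := by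
  have hdist : dist x y ^ 2 ≤ r ^ 2 := pow_le_pow_left₀ dist_nonneg hxy 2
  have hexp : exp (-(1 / 2)) ≤ exp (-dist x y ^ 2 / (4 * t)) := by
    rw [exp_le_exp, neg_div, neg_le_neg_iff, div_le_iff₀ (by positivity)]
    linarith
  have hpow : (4 * π * r ^ 2) ^ (-(d : ℝ) / 2) ≤ (4 * π * t) ^ (-(d : ℝ) / 2) :=
    rpow_le_rpow_of_nonpos (by positivity) (by gcongr)
      (by linarith [(Nat.cast_nonneg d : (0 : ℝ) ≤ d)])
  rw [heatKernel, mul_comm (_ ^ _)]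
  exact mul_le_mul hexp hpow (by positivity) (exp_nonneg _)

section OccupationTime

variable {Ω T E : Type*} [MeasurableSpace Ω] [MeasurableSpace T] [MeasurableSpace E]
  {P : Measure Ω} {μ : Measure T} [IsFiniteMeasure P] {X : T → Ω → E}

theorem measurable_measureReal_mem (hX : Measurable fun p : T × Ω => X p.1 p.2) {S : Set E}
    (hS : MeasurableSet S) : Measurable fun s => P.real {ω | X s ω ∈ S} :=
  (measurable_measure_prodMk_left (hX hS)).ennreal_toReal

theorem integrable_measureReal_mem [IsFiniteMeasure μ]
    (hX : Measurable fun p : T × Ω => X p.1 p.2) {S : Set E} (hS : MeasurableSet S) :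
    Integrable (fun s => P.real {ω | X s ω ∈ S}) μ :=
  .of_bound (measurable_measureReal_mem hX hS).aestronglyMeasurable (P.real univ)
    (.of_forall fun _ => by
      rw [Real.norm_of_nonneg measureReal_nonneg]
      exact measureReal_mono (subset_univ _))

theorem integral_occupationTime_eq [IsFiniteMeasure μ]
    (hX : Measurable fun p : T × Ω => X p.1 p.2) {S : Set E} (hS : MeasurableSet S) :
    ∫ ω, ∫ s, S.indicator (fun _ => (1 : ℝ)) (X s ω) ∂μ ∂P = ∫ s, P.real {ω | X s ω ∈ S} ∂μ := by
  have hF : Integrable (Function.uncurry fun ω s => S.indicator (fun _ => (1 : ℝ)) (X s ω))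
      (P.prod μ) :=
    .of_bound ((measurable_const.indicator hS).comp (hX.comp measurable_swap)).aestronglyMeasurable
      1 (.of_forall fun p =>
        (norm_indicator_le_norm_self (fun _ : E => (1 : ℝ)) (X p.2 p.1)).trans_eq norm_one)
  rw [integral_integral_swap hF]
  refine integral_congr_ae (.of_forall fun s => ?_)
  simp_rw [← indicator_comp_right (X s)]
  exact integral_indicator_one (hX.comp (measurable_const.prodMk measurable_id) hS)

end OccupationTime

namespace IsBrownianMotion

variable {Ω : Type*} [MeasurableSpace Ω] {P : Measure Ω} {d : ℕ}
  {X : ℝ → Ω → EuclideanSpace ℝ (Fin d)} {x₀ : EuclideanSpace ℝ (Fin d)}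

theorem measureReal_mem_eq_integral_heatKernel (hBM : IsBrownianMotion P d X x₀) {t : ℝ}
    (ht : 0 < t) {A : Set (EuclideanSpace ℝ (Fin d))} (hA : MeasurableSet A) :
    P.real {ω | X t ω ∈ A} = ∫ y in A, heatKernel d t x₀ y := by
  have hshift : ∀ y, heatKernel d t x₀ (y + x₀) = heatKernel d t 0 y := fun y => by
    simp [heatKernel, dist_eq_norm]
  have hevent : {ω | X t ω - X 0 ω ∈ (· + x₀) ⁻¹' A} =ᵐ[P] {ω | X t ω ∈ A} := by
    rw [Filter.eventuallyEq_set]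
    filter_upwards [hBM.start] with ω h0
    simp only [mem_preimage, h0, sub_add_cancel]
  rw [measureReal_def, ← measure_congr hevent,
    hBM.incr 0 t le_rfl ht _ (hA.preimage (measurable_add_const x₀)), sub_zero,
    ← (measurePreserving_add_right volume x₀).setIntegral_preimage_emb
      (measurableEmbedding_addRight x₀) (heatKernel d t x₀) A]
  simp_rw [hshift]

theorem mul_measureReal_inter_closedBall_le (hBM : IsBrownianMotion P d X x₀) {r t : ℝ}
    (ht : 0 < t) (hrt : r ^ 2 ≤ 2 * t) (htr : t ≤ r ^ 2) {S : Set (EuclideanSpace ℝ (Fin d))}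
    (hS : MeasurableSet S) :
    exp (-(1 / 2)) * (4 * π * r ^ 2) ^ (-(d : ℝ) / 2) * volume.real (S ∩ closedBall x₀ r) ≤
      P.real {ω | X t ω ∈ S} := by
  have := hBM.isProb
  have hB : MeasurableSet (S ∩ closedBall x₀ r) := hS.inter measurableSet_closedBall
  calc _ ≤ ∫ y in S ∩ closedBall x₀ r, heatKernel d t x₀ y :=
        setIntegral_ge_of_const_le_real hB
          ((measure_mono inter_subset_right).trans_lt measure_closedBall_lt_top).ne
          (fun y hy => exp_neg_half_mul_le_heatKernel ht (mem_closedBall'.1 hy.2) hrt htr)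
          (((continuous_heatKernel d t x₀).locallyIntegrable.integrableOn_isCompact
            (isCompact_closedBall x₀ r)).mono_set inter_subset_right)
    _ = P.real {ω | X t ω ∈ S ∩ closedBall x₀ r} :=
        (hBM.measureReal_mem_eq_integral_heatKernel ht hB).symm
    _ ≤ P.real {ω | X t ω ∈ S} := measureReal_mono fun ω hω => hω.1

theorem mul_measureReal_inter_closedBall_le_integral_occupationTime
    (hBM : IsBrownianMotion P d X x₀) {r : ℝ} (hr : 0 < r) {S : Set (EuclideanSpace ℝ (Fin d))}
    (hS : MeasurableSet S) :
    r ^ 2 / 2 * (exp (-(1 / 2)) * (4 * π * r ^ 2) ^ (-(d : ℝ) / 2) *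
        volume.real (S ∩ closedBall x₀ r)) ≤
      ∫ ω, (∫ s in Ioc 0 (r ^ 2), S.indicator (fun _ => (1 : ℝ)) (X s ω)) ∂P := by
  have := hBM.isProb
  have hr2 : 0 < r ^ 2 / 2 := by positivity
  have hprob : ∀ s ∈ Ioc (r ^ 2 / 2) (r ^ 2), exp (-(1 / 2)) * (4 * π * r ^ 2) ^ (-(d : ℝ) / 2) *
      volume.real (S ∩ closedBall x₀ r) ≤ P.real {ω | X s ω ∈ S} := fun s hs =>
    hBM.mul_measureReal_inter_closedBall_le (hr2.trans hs.1) (by linarith [hs.1]) hs.2 hS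
  calc _ = exp (-(1 / 2)) * (4 * π * r ^ 2) ^ (-(d : ℝ) / 2) * volume.real (S ∩ closedBall x₀ r) *
        volume.real (Ioc (r ^ 2 / 2) (r ^ 2)) := by
        rw [Real.volume_real_Ioc_of_le (by linarith)]
        ring
    _ ≤ ∫ s in Ioc (r ^ 2 / 2) (r ^ 2), P.real {ω | X s ω ∈ S} :=
        setIntegral_ge_of_const_le_real measurableSet_Ioc measure_Ioc_lt_top.ne hprob
          (integrable_measureReal_mem hBM.meas hS)
    _ ≤ ∫ s in Ioc 0 (r ^ 2), P.real {ω | X s ω ∈ S} :=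
        setIntegral_mono_set (integrable_measureReal_mem hBM.meas hS)
          (.of_forall fun _ => measureReal_nonneg) (Ioc_subset_Ioc_left hr2.le).eventuallyLE
    _ = _ := (integral_occupationTime_eq hBM.meas hS).symm

end IsBrownianMotion

theorem occupation_time_first_moment_lower_bound_general
    (d : ℕ)
    {Ω : Type*} [MeasurableSpace Ω] (P : Measure Ω)
    (x : EuclideanSpace ℝ (Fin d))
    (X : ℝ → Ω → EuclideanSpace ℝ (Fin d))
    (hBM : IsBrownianMotion P d X x)
    (K : Set (EuclideanSpace ℝ (Fin d)))
    (hxK : x ∈ K)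
    (α : ℝ)
    (C₁ C₂ : ℝ) (hC₁ : 0 < C₁) (hC₂ : 0 < C₂)
    (hupper : ∀ (y : EuclideanSpace ℝ (Fin d)) (r γ : ℝ), 0 < γ → γ ≤ r → r ≤ 1 →
      volume (cthickening γ K ∩ closedBall y r)
        ≤ ENNReal.ofReal (C₁ * r ^ α * γ ^ ((d : ℝ) - α)))
    (hlower : ∀ (y : EuclideanSpace ℝ (Fin d)) (r γ : ℝ), 0 < γ → γ ≤ r → r ≤ 1 →
      y ∈ cthickening (r / 2) K →
      ENNReal.ofReal (C₂ * r ^ α * γ ^ ((d : ℝ) - α))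
        ≤ volume (cthickening γ K ∩ closedBall y r))
    (a : ℝ) (ha0 : 0 < a) (ha1 : a < 1)
    (haC : C₁ * a ^ ((d : ℝ) - α) ≤ C₂ / 2) :
    ∃ C : ℝ, 0 < C ∧ ∀ (δ : ℝ) (n : ℕ), 0 < δ → a ^ n ≤ δ ^ 2 → δ ^ 2 ≤ 1 →
      C * a ^ ((n : ℝ) * ((d : ℝ) - α)) * δ ^ ((2 : ℝ) - d + α)
        ≤ ∫ ω, (∫ s in Set.Ioc (0 : ℝ) (δ ^ 2),
            Set.indicator (cthickening (a ^ n) K \ cthickening (a ^ (n + 1)) K)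
              (fun _ => (1 : ℝ)) (X s ω)) ∂P := by
  refine ⟨C₂ / 4 * exp (-(1 / 2)) * (4 * π) ^ (-(d : ℝ) / 2), by positivity,
    fun δ n hδ han hδ1 => ?_⟩
  rw [pow_succ' a n]
  set S := cthickening (a ^ n) K \ cthickening (a * a ^ n) K
  have hvol : C₂ / 2 * δ ^ α * (a ^ n) ^ ((d : ℝ) - α) ≤ volume.real (S ∩ closedBall x δ) :=
    (ENNReal.ofReal_le_iff_le_toReal
      ((measure_mono inter_subset_right).trans_lt measure_closedBall_lt_top).ne).1
      (IsLowerMinkowskiRegular.ofReal_le_volume_shell_inter_closedBall hlower hupper hC₁.le ha0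
        ha1.le haC (pow_pos ha0 n) (han.trans (by nlinarith)) (by nlinarith)
        (self_subset_cthickening K hxK))
  have hconst : C₂ / 4 * exp (-(1 / 2)) * (4 * π) ^ (-(d : ℝ) / 2) *
      a ^ ((n : ℝ) * ((d : ℝ) - α)) * δ ^ ((2 : ℝ) - d + α) = δ ^ 2 / 2 *
        (exp (-(1 / 2)) * (4 * π * δ ^ 2) ^ (-(d : ℝ) / 2) *
          (C₂ / 2 * δ ^ α * (a ^ n) ^ ((d : ℝ) - α))) := by
    rw [mul_sq_rpow_neg_div_two (by positivity) hδ, rpow_mul ha0.le, rpow_natCast,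
      show (2 : ℝ) - d + α = 2 + -d + α by ring, rpow_add hδ, rpow_add hδ, rpow_two]
    ring
  calc _ = _ := hconst
    _ ≤ δ ^ 2 / 2 * (exp (-(1 / 2)) * (4 * π * δ ^ 2) ^ (-(d : ℝ) / 2) *
          volume.real (S ∩ closedBall x δ)) := by gcongr
    _ ≤ _ := hBM.mul_measureReal_inter_closedBall_le_integral_occupationTime hδ
        (isClosed_cthickening.measurableSet.diff isClosed_cthickening.measurableSet)

/-- First-moment lower bound: for Brownian motion started at `x ∈ K`, where
`K ⊆ B(x,1)` is compact satisfying the two-sided Minkowski regularity conditions with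
exponent `α ∈ (d-2, d)`, the occupation time
`Z_n = ∫₀^{δ²} 1_{K'_n}(X_s) ds` of the shell `K'_n = K_{a^n} \ K_{a^{n+1}}` satisfies
`E(Z_n) ≥ C a^{n(d-α)} δ^{2-d+α}` whenever `a^n ≤ δ² ≤ 1`. -/
theorem occupation_time_first_moment_lower_bound
    (d : ℕ) (hd : 2 < d)
    {Ω : Type*} [MeasurableSpace Ω] (P : Measure Ω)
    (x : EuclideanSpace ℝ (Fin d))
    (X : ℝ → Ω → EuclideanSpace ℝ (Fin d))
    (hBM : IsBrownianMotion P d X x)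
    (K : Set (EuclideanSpace ℝ (Fin d))) (hKcpt : IsCompact K)
    (hxK : x ∈ K) (hKball : K ⊆ closedBall x 1)
    (α : ℝ) (hα1 : (d : ℝ) - 2 < α) (hα2 : α < d)
    (C₁ C₂ : ℝ) (hC₁ : 0 < C₁) (hC₂ : 0 < C₂)
    (hupper : ∀ (y : EuclideanSpace ℝ (Fin d)) (r γ : ℝ), 0 < γ → γ ≤ r → r ≤ 1 →
      volume (cthickening γ K ∩ closedBall y r)
        ≤ ENNReal.ofReal (C₁ * r ^ α * γ ^ ((d : ℝ) - α)))
    (hlower : ∀ (y : EuclideanSpace ℝ (Fin d)) (r γ : ℝ), 0 < γ → γ ≤ r → r ≤ 1 →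
      y ∈ cthickening (r / 2) K →
      ENNReal.ofReal (C₂ * r ^ α * γ ^ ((d : ℝ) - α))
        ≤ volume (cthickening γ K ∩ closedBall y r))
    (a : ℝ) (ha0 : 0 < a) (ha1 : a < 1)
    (haC : C₁ * a ^ ((d : ℝ) - α) ≤ C₂ / 2) :
    ∃ C : ℝ, 0 < C ∧ ∀ (δ : ℝ) (n : ℕ), 0 < δ → a ^ n ≤ δ ^ 2 → δ ^ 2 ≤ 1 →
      C * a ^ ((n : ℝ) * ((d : ℝ) - α)) * δ ^ ((2 : ℝ) - d + α)
        ≤ ∫ ω, (∫ s in Set.Ioc (0 : ℝ) (δ ^ 2),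
            Set.indicator (cthickening (a ^ n) K \ cthickening (a ^ (n + 1)) K)
              (fun _ => (1 : ℝ)) (X s ω)) ∂P :=
  occupation_time_first_moment_lower_bound_general d P x X hBM K hxK α C₁ C₂ hC₁ hC₂ hupper hlower a
    ha0 ha1 haC
end

section
/- Let V ∈ L¹_loc(ℝ^d) be a nonnegative potential, t > 0, and x, y ∈ ℝ^d with V*Γ_t(x) + V*Γ_t(y) < ∞, where Γ_t(z) = ∫₀^t (4πs)^{-d/2} exp(−|z|²/(4s)) ds. Then the Feynman–Kac kernel satisfies p_t^V(x,y) ≥ (1/2)·e^{−A}·p_t(x,y) > 0 for a suitable finite constant A = A(x,y,t,V); in particular p_t^V(x,y) > 0. -/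
/-!
Let `F(ω) = ∫₀ᵗ V(ω_s) ds`. Under the bridge, `ω_s` has density `p_s(x,z) p_{t-s}(z,y)`, and since
one of `s`, `t - s` is at least `t/2`, this density is at most
`(2πt)^{-d/2} (p_s(x,z) + p_{t-s}(y,z))`. Integrating in `z` and `s` bounds the mean action
`E = ∫ F dμ` by `(2πt)^{-d/2} (V*Γ_t(x) + V*Γ_t(y)) < ∞`. By Markov's inequality at least half
of the mass `p_t(x,y)` lies where `F ≤ A := 2E/p_t(x,y) + 1`, and there `e^{-F} ≥ e^{-A}`.
-/

open MeasureTheory Metric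
open scoped ENNReal

/-- `Γ_t(x,z) = ∫₀^t p_s(x,z) ds`, the time-truncated Green function. -/
noncomputable def GammaKer (d : ℕ) (t : ℝ) (x z : EuclideanSpace ℝ (Fin d)) : ℝ :=
  ∫ s in Set.Ioc (0 : ℝ) t, heatKernel d s x z

/-- `exp(−y)` for an extended nonnegative real `y`, with the convention `exp(−∞) = 0`. -/
noncomputable def expNeg (y : ℝ≥0∞) : ℝ≥0∞ :=
  if y = ⊤ then 0 else ENNReal.ofReal (Real.exp (-(y.toReal)))

open Real

theorem exp_neg_div_le (n : ℕ) {c s : ℝ} (hc : 0 < c) (hs : 0 < s) :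
    exp (-(c / s)) ≤ n.factorial * (s / c) ^ n := by
  rw [exp_neg, ← inv_div c s, inv_pow, ← div_eq_mul_inv]
  refine inv_le_of_inv_le₀ (by positivity) ?_
  simpa using pow_div_factorial_le_exp (x := c / s) (by positivity) n

section HeatKernel

variable {d : ℕ}

@[fun_prop]
theorem Measurable.heatKernel {α : Type*} [MeasurableSpace α] {s : α → ℝ}
    {a b : α → EuclideanSpace ℝ (Fin d)} (hs : Measurable s) (ha : Measurable a)
    (hb : Measurable b) : Measurable fun q => heatKernel d (s q) (a q) (b q) := by
  unfold _root_.heatKernel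
  fun_prop

theorem heatKernel_pos {s : ℝ} (hs : 0 < s) (a b : EuclideanSpace ℝ (Fin d)) :
    0 < heatKernel d s a b := by
  unfold heatKernel
  positivity

theorem heatKernel_comm (s : ℝ) (a b : EuclideanSpace ℝ (Fin d)) :
    heatKernel d s a b = heatKernel d s b a := by
  simp only [heatKernel, dist_comm]

theorem heatKernel_le_of_half_le {s t : ℝ} (ht : 0 < t) (hs : t / 2 ≤ s)
    (a b : EuclideanSpace ℝ (Fin d)) :
    heatKernel d s a b ≤ (2 * π * t) ^ (-(d : ℝ) / 2) := by
  have hs0 : 0 < s := by linarith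
  have hexp : exp (-dist a b ^ 2 / (4 * s)) ≤ 1 :=
    exp_le_one_iff.mpr (div_nonpos_of_nonpos_of_nonneg (by nlinarith [sq_nonneg (dist a b)])
      (by linarith))
  calc heatKernel d s a b ≤ (4 * π * s) ^ (-(d : ℝ) / 2) :=
        mul_le_of_le_one_right (by positivity) hexp
    _ ≤ (2 * π * t) ^ (-(d : ℝ) / 2) :=
        rpow_le_rpow_of_nonpos (by positivity) (by nlinarith [pi_pos])
          (by linarith [(Nat.cast_nonneg d : (0 : ℝ) ≤ d)])

theorem heatKernel_mul_heatKernel_le {s t : ℝ} (hs : 0 < s) (hst : s < t)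
    (x y z : EuclideanSpace ℝ (Fin d)) :
    heatKernel d s x z * heatKernel d (t - s) z y ≤
      (2 * π * t) ^ (-(d : ℝ) / 2) * (heatKernel d s x z + heatKernel d (t - s) y z) := by
  have ht : 0 < t := hs.trans hst
  have h₁ := (heatKernel_pos hs x z).le
  have h₂ := (heatKernel_pos (sub_pos.mpr hst) y z).le
  rw [heatKernel_comm _ z y]
  rcases le_total s (t / 2) with h | h
  · nlinarith [heatKernel_le_of_half_le (d := d) ht (by linarith : t / 2 ≤ t - s) y z]
  · nlinarith [heatKernel_le_of_half_le (d := d) ht h x z]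

/-- Off the diagonal, `exp (-c / s) ≤ d! (s / c)^d` absorbs the singularity of `(4πs)^{-d/2}`
at `s = 0`. -/
theorem heatKernel_le_of_ne {s t : ℝ} (hs : 0 < s) (hst : s ≤ t)
    {x z : EuclideanSpace ℝ (Fin d)} (hxz : x ≠ z) :
    heatKernel d s x z ≤
      (4 * π) ^ (-(d : ℝ) / 2) * d.factorial * t ^ ((d : ℝ) / 2) / (dist x z ^ 2 / 4) ^ d := by
  set c := dist x z ^ 2 / 4
  have hc : 0 < c := by have := dist_pos.mpr hxz; positivity
  have hpow : s ^ (-(d : ℝ) / 2) * s ^ d = s ^ ((d : ℝ) / 2) := by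
    rw [← rpow_natCast, ← rpow_add hs]
    ring_nf
  calc heatKernel d s x z = (4 * π) ^ (-(d : ℝ) / 2) * s ^ (-(d : ℝ) / 2) * exp (-(c / s)) := by
        rw [heatKernel, mul_rpow (by positivity) hs.le]
        congr 2
        ring
    _ ≤ (4 * π) ^ (-(d : ℝ) / 2) * s ^ (-(d : ℝ) / 2) * (d.factorial * (s / c) ^ d) := by
        gcongr
        exact exp_neg_div_le d hc hs
    _ = (4 * π) ^ (-(d : ℝ) / 2) * d.factorial * (s ^ (-(d : ℝ) / 2) * s ^ d) / c ^ d := by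
        rw [div_pow]
        ring
    _ ≤ (4 * π) ^ (-(d : ℝ) / 2) * d.factorial * t ^ ((d : ℝ) / 2) / c ^ d := by
        rw [hpow]
        gcongr

theorem integrableOn_heatKernel_Ioc {t : ℝ} {x z : EuclideanSpace ℝ (Fin d)} (hxz : x ≠ z) :
    IntegrableOn (fun s => heatKernel d s x z) (Set.Ioc 0 t) := by
  refine Measure.integrableOn_of_bounded (M := (4 * π) ^ (-(d : ℝ) / 2) * d.factorial *
    t ^ ((d : ℝ) / 2) / (dist x z ^ 2 / 4) ^ d) measure_Ioc_lt_top.ne (by fun_prop) ?_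
  filter_upwards [ae_restrict_mem measurableSet_Ioc] with s hs
  rw [Real.norm_of_nonneg (heatKernel_pos hs.1 x z).le]
  exact heatKernel_le_of_ne hs.1 hs.2 hxz

theorem lintegral_heatKernel_Ioc {t : ℝ} {x z : EuclideanSpace ℝ (Fin d)} (hxz : x ≠ z) :
    ∫⁻ s in Set.Ioc 0 t, ENNReal.ofReal (heatKernel d s x z) =
      ENNReal.ofReal (GammaKer d t x z) := by
  rw [GammaKer, ofReal_integral_eq_lintegral_ofReal (integrableOn_heatKernel_Ioc hxz)]
  filter_upwards [ae_restrict_mem measurableSet_Ioc] with s hs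
  exact (heatKernel_pos hs.1 x z).le

theorem setLIntegral_Ioo_lintegral_mul_heatKernel (hd : 1 ≤ d) (t : ℝ)
    {f : EuclideanSpace ℝ (Fin d) → ℝ≥0∞} (hf : Measurable f) (w : EuclideanSpace ℝ (Fin d)) :
    ∫⁻ s in Set.Ioo 0 t, ∫⁻ z, f z * ENNReal.ofReal (heatKernel d s w z) =
      ∫⁻ z, f z * ENNReal.ofReal (GammaKer d t w z) := by
  have : Nonempty (Fin d) := ⟨⟨0, hd⟩⟩
  rw [lintegral_lintegral_swap (by fun_prop)]
  refine lintegral_congr_ae ?_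
  -- On the diagonal `s ↦ p_s(w, w)` need not be integrable, so `GammaKer d t w w` is a junk value.
  filter_upwards [Measure.ae_ne volume w] with z hz
  rw [lintegral_const_mul _ (by fun_prop), setLIntegral_congr Ioo_ae_eq_Ioc,
    lintegral_heatKernel_Ioc hz.symm]

end HeatKernel

theorem setLIntegral_Ioo_comp_sub_left (g : ℝ → ℝ≥0∞) (t : ℝ) :
    ∫⁻ s in Set.Ioo 0 t, g (t - s) = ∫⁻ s in Set.Ioo 0 t, g s := by
  have hpre : (fun s => t - s) ⁻¹' Set.Ioo 0 t = Set.Ioo 0 t := by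
    ext s
    simp only [Set.mem_preimage, Set.mem_Ioo]
    constructor <;> rintro ⟨h₁, h₂⟩ <;> constructor <;> linarith
  have := (Measure.measurePreserving_sub_left volume t).setLIntegral_comp_preimage_emb
    (MeasurableEquiv.subLeft t).measurableEmbedding g (Set.Ioo 0 t)
  rwa [hpre] at this

theorem measurable_expNeg : Measurable expNeg :=
  Measurable.ite (measurableSet_singleton ⊤) measurable_const (by fun_prop)

theorem ofReal_exp_neg_le_expNeg {a : ℝ} (ha : 0 ≤ a) {y : ℝ≥0∞} (hy : y ≤ ENNReal.ofReal a) :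
    ENNReal.ofReal (exp (-a)) ≤ expNeg y := by
  rw [expNeg, if_neg (ne_top_of_le_ne_top ENNReal.ofReal_ne_top hy)]
  gcongr
  exact ENNReal.toReal_le_of_le_ofReal ha hy

section Markov

variable {Ω : Type*} [MeasurableSpace Ω] {μ : Measure Ω} {F : Ω → ℝ≥0∞}

theorem ofReal_exp_neg_mul_measure_le_lintegral_expNeg (hF : AEMeasurable F μ) {a : ℝ}
    (ha : 0 ≤ a) :
    ENNReal.ofReal (exp (-a)) * μ {ω | F ω ≤ ENNReal.ofReal a} ≤ ∫⁻ ω, expNeg (F ω) ∂μ :=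
  (mul_le_mul_right (measure_mono fun _ hω => ofReal_exp_neg_le_expNeg ha hω) _).trans
    (mul_meas_ge_le_lintegral₀ (measurable_expNeg.comp_aemeasurable hF) _)

theorem half_measure_univ_le_measure_setOf_le [IsFiniteMeasure μ] (hF : AEMeasurable F μ)
    {a : ℝ≥0∞} (ha₀ : a ≠ 0) (ha : a ≠ ⊤) (hmean : ∫⁻ ω, F ω ∂μ ≤ a * (μ Set.univ / 2)) :
    μ Set.univ / 2 ≤ μ {ω | F ω ≤ a} := by
  have hmarkov : μ {ω | F ω ≤ a}ᶜ ≤ μ Set.univ / 2 := calc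
    μ {ω | F ω ≤ a}ᶜ ≤ μ {ω | a ≤ F ω} := measure_mono fun ω (hω : ¬F ω ≤ a) => (not_le.mp hω).le
    _ ≤ (∫⁻ ω, F ω ∂μ) / a := meas_ge_le_lintegral_div hF ha₀ ha
    _ ≤ μ Set.univ / 2 := ENNReal.div_le_of_le_mul' hmean
  have hsplit : μ Set.univ / 2 + μ Set.univ / 2 ≤ μ {ω | F ω ≤ a} + μ Set.univ / 2 := by
    rw [ENNReal.add_halves]
    exact (measure_univ_le_add_compl _).trans (by gcongr)
  exact (ENNReal.add_le_add_iff_right (by finiteness)).mp hsplit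

theorem exists_ofReal_half_mul_exp_neg_mul_le_lintegral_expNeg [IsFiniteMeasure μ]
    (hF : AEMeasurable F μ) (hE : ∫⁻ ω, F ω ∂μ ≠ ⊤) {m : ℝ} (hm₀ : 0 < m)
    (hm : μ Set.univ = ENNReal.ofReal m) :
    ∃ a : ℝ, ENNReal.ofReal (1 / 2 * exp (-a) * m) ≤ ∫⁻ ω, expNeg (F ω) ∂μ := by
  set E := ∫⁻ ω, F ω ∂μ
  set a : ℝ := 2 * E.toReal / m + 1
  have ha : 0 < a := by positivity
  have hhalf : μ Set.univ / 2 = ENNReal.ofReal (m / 2) := by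
    rw [hm, ENNReal.ofReal_div_of_pos two_pos, ENNReal.ofReal_ofNat]
  have hmean : E ≤ ENNReal.ofReal a * (μ Set.univ / 2) := by
    rw [hhalf, ← ENNReal.ofReal_mul ha.le, ← ENNReal.ofReal_toReal hE]
    gcongr
    have : a * (m / 2) = E.toReal + m / 2 := by simp only [a]; field_simp
    linarith
  refine ⟨a, ?_⟩
  calc ENNReal.ofReal (1 / 2 * exp (-a) * m) = ENNReal.ofReal (exp (-a)) * (μ Set.univ / 2) := by
        rw [hhalf, ← ENNReal.ofReal_mul (exp_pos _).le]
        ring_nf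
    _ ≤ ENNReal.ofReal (exp (-a)) * μ {ω | F ω ≤ ENNReal.ofReal a} := by
        gcongr
        exact half_measure_univ_le_measure_setOf_le hF (ENNReal.ofReal_pos.mpr ha).ne'
          ENNReal.ofReal_ne_top hmean
    _ ≤ ∫⁻ ω, expNeg (F ω) ∂μ := ofReal_exp_neg_mul_measure_le_lintegral_expNeg hF ha.le

end Markov

theorem lintegral_comp_eq_lintegral_mul_of_measure_preimage {Ω E : Type*} [MeasurableSpace Ω]
    [MeasurableSpace E] {μ : Measure Ω} {ν : Measure E} {X : Ω → E} {g : E → ℝ≥0∞}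
    (hX : Measurable X) (hg : Measurable g)
    (hXg : ∀ A, MeasurableSet A → μ (X ⁻¹' A) = ∫⁻ z in A, g z ∂ν)
    {f : E → ℝ≥0∞} (hf : Measurable f) :
    ∫⁻ ω, f (X ω) ∂μ = ∫⁻ z, g z * f z ∂ν := by
  have hmap : μ.map X = ν.withDensity g := Measure.ext fun A hA => by
    rw [Measure.map_apply hX hA, withDensity_apply _ hA, hXg A hA]
  rw [← lintegral_map hf hX, hmap, lintegral_withDensity_eq_lintegral_mul _ hg hf]
  rfl

section FeynmanKac

variable {d : ℕ} {t : ℝ} {x y : EuclideanSpace ℝ (Fin d)} {f : EuclideanSpace ℝ (Fin d) → ℝ≥0∞}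
  {Ω : Type*} [MeasurableSpace Ω] {μ : Measure Ω} {e : ℝ → Ω → EuclideanSpace ℝ (Fin d)}

theorem ofReal_heatKernel_mul_heatKernel_le {s : ℝ} (hs : 0 < s) (hst : s < t)
    (z : EuclideanSpace ℝ (Fin d)) :
    ENNReal.ofReal (heatKernel d s x z * heatKernel d (t - s) z y) ≤
      ENNReal.ofReal ((2 * π * t) ^ (-(d : ℝ) / 2)) *
        (ENNReal.ofReal (heatKernel d s x z) + ENNReal.ofReal (heatKernel d (t - s) y z)) := by
  have ht : 0 < t := hs.trans hst
  rw [← ENNReal.ofReal_add (heatKernel_pos hs x z).le (heatKernel_pos (sub_pos.mpr hst) y z).le,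
    ← ENNReal.ofReal_mul (by positivity)]
  exact ENNReal.ofReal_le_ofReal (heatKernel_mul_heatKernel_le hs hst x y z)

theorem lintegral_comp_bridge_le (hf : Measurable f) {s : ℝ} (hs : 0 < s) (hst : s < t)
    {X : Ω → EuclideanSpace ℝ (Fin d)} (hX : Measurable X)
    (hXmarg : ∀ A : Set (EuclideanSpace ℝ (Fin d)), MeasurableSet A →
      μ {ω | X ω ∈ A} = ∫⁻ z in A, ENNReal.ofReal (heatKernel d s x z * heatKernel d (t - s) z y)) :
    ∫⁻ ω, f (X ω) ∂μ ≤ ENNReal.ofReal ((2 * π * t) ^ (-(d : ℝ) / 2)) *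
      ((∫⁻ z, f z * ENNReal.ofReal (heatKernel d s x z)) +
        ∫⁻ z, f z * ENNReal.ofReal (heatKernel d (t - s) y z)) := by
  rw [lintegral_comp_eq_lintegral_mul_of_measure_preimage hX (by fun_prop) hXmarg hf,
    ← lintegral_add_left (by fun_prop), ← lintegral_const_mul' _ _ ENNReal.ofReal_ne_top]
  refine lintegral_mono fun z => ?_
  calc ENNReal.ofReal (heatKernel d s x z * heatKernel d (t - s) z y) * f z
      ≤ ENNReal.ofReal ((2 * π * t) ^ (-(d : ℝ) / 2)) *
          (ENNReal.ofReal (heatKernel d s x z) + ENNReal.ofReal (heatKernel d (t - s) y z)) *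
          f z := by
        gcongr
        exact ofReal_heatKernel_mul_heatKernel_le hs hst z
    _ = _ := by ring

theorem lintegral_setLIntegral_comp_bridge_le [SFinite μ] (hd : 1 ≤ d) (hf : Measurable f)
    (hemeas : Measurable fun p : ℝ × Ω => e p.1 p.2)
    (hmarg : ∀ s : ℝ, 0 < s → s < t →
      ∀ A : Set (EuclideanSpace ℝ (Fin d)), MeasurableSet A →
        μ {ω | e s ω ∈ A}
          = ∫⁻ z in A, ENNReal.ofReal (heatKernel d s x z * heatKernel d (t - s) z y)) :
    ∫⁻ ω, (∫⁻ s in Set.Ioc 0 t, f (e s ω)) ∂μ ≤ ENNReal.ofReal ((2 * π * t) ^ (-(d : ℝ) / 2)) *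
      ((∫⁻ z, f z * ENNReal.ofReal (GammaKer d t x z)) +
        ∫⁻ z, f z * ENNReal.ofReal (GammaKer d t y z)) := by
  have hmeas : ∀ w, Measurable fun s => ∫⁻ z, f z * ENNReal.ofReal (heatKernel d s w z) :=
    fun w => (by fun_prop : Measurable fun q : ℝ × EuclideanSpace ℝ (Fin d) =>
      f q.2 * ENNReal.ofReal (heatKernel d q.1 w q.2)).lintegral_prod_right'
  calc ∫⁻ ω, (∫⁻ s in Set.Ioc 0 t, f (e s ω)) ∂μ
      = ∫⁻ s in Set.Ioo 0 t, ∫⁻ ω, f (e s ω) ∂μ := by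
        rw [lintegral_lintegral_swap (by fun_prop), setLIntegral_congr Ioo_ae_eq_Ioc]
    _ ≤ ∫⁻ s in Set.Ioo 0 t, ENNReal.ofReal ((2 * π * t) ^ (-(d : ℝ) / 2)) *
          ((∫⁻ z, f z * ENNReal.ofReal (heatKernel d s x z)) +
            ∫⁻ z, f z * ENNReal.ofReal (heatKernel d (t - s) y z)) :=
        setLIntegral_mono' measurableSet_Ioo fun s hs =>
          lintegral_comp_bridge_le hf hs.1 hs.2 (by fun_prop) (hmarg s hs.1 hs.2)
    _ = _ := by
        rw [lintegral_const_mul' _ _ ENNReal.ofReal_ne_top, lintegral_add_left (hmeas x),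
          setLIntegral_Ioo_comp_sub_left (fun s => ∫⁻ z, f z * ENNReal.ofReal (heatKernel d s y z)),
          setLIntegral_Ioo_lintegral_mul_heatKernel hd t hf,
          setLIntegral_Ioo_lintegral_mul_heatKernel hd t hf]

end FeynmanKac

theorem feynman_kac_kernel_positive_general
    (d : ℕ) (hd : 1 ≤ d) (t : ℝ) (ht : 0 < t)
    (x y : EuclideanSpace ℝ (Fin d))
    (V : EuclideanSpace ℝ (Fin d) → ℝ) (hVmeas : Measurable V)
    (hconv : (∫⁻ z, ENNReal.ofReal (V z) * ENNReal.ofReal (GammaKer d t x z)) +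
        (∫⁻ z, ENNReal.ofReal (V z) * ENNReal.ofReal (GammaKer d t y z)) < ⊤)
    {Ω : Type*} [MeasurableSpace Ω] (μ : Measure Ω) [IsFiniteMeasure μ]
    (e : ℝ → Ω → EuclideanSpace ℝ (Fin d))
    (hemeas : Measurable fun p : ℝ × Ω => e p.1 p.2)
    (hmass : μ Set.univ = ENNReal.ofReal (heatKernel d t x y))
    (hmarg : ∀ s : ℝ, 0 < s → s < t →
      ∀ A : Set (EuclideanSpace ℝ (Fin d)), MeasurableSet A →
        μ {ω | e s ω ∈ A}
          = ∫⁻ z in A, ENNReal.ofReal (heatKernel d s x z * heatKernel d (t - s) z y)) :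
    ∃ A : ℝ,
      ENNReal.ofReal ((1 / 2) * Real.exp (-A) * heatKernel d t x y)
          ≤ ∫⁻ ω, expNeg (∫⁻ s in Set.Ioc (0 : ℝ) t, ENNReal.ofReal (V (e s ω))) ∂μ ∧
      0 < ∫⁻ ω, expNeg (∫⁻ s in Set.Ioc (0 : ℝ) t, ENNReal.ofReal (V (e s ω))) ∂μ := by
  have hp : 0 < heatKernel d t x y := heatKernel_pos ht x y
  have hF : Measurable fun ω => ∫⁻ s in Set.Ioc (0 : ℝ) t, ENNReal.ofReal (V (e s ω)) := by
    fun_prop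
  have hE : ∫⁻ ω, (∫⁻ s in Set.Ioc (0 : ℝ) t, ENNReal.ofReal (V (e s ω))) ∂μ ≠ ⊤ :=
    ((lintegral_setLIntegral_comp_bridge_le hd hVmeas.ennreal_ofReal hemeas hmarg).trans_lt
      (ENNReal.mul_lt_top ENNReal.ofReal_lt_top hconv)).ne
  obtain ⟨A, hA⟩ :=
    exists_ofReal_half_mul_exp_neg_mul_le_lintegral_expNeg hF.aemeasurable hE hp hmass
  exact ⟨A, hA, (ENNReal.ofReal_pos.mpr (by positivity)).trans_le hA⟩

/-- **Positivity of the Feynman–Kac kernel.** If `V ≥ 0` is locally integrable and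
`V*Γ_t(x) + V*Γ_t(y) < ∞`, then the Feynman–Kac kernel, represented by the Brownian
bridge measure `μ` from `x` to `y` in time `t` (with total mass `p_t(x,y)` and the usual
one-dimensional marginals), satisfies `p_t^V(x,y) ≥ (1/2) e^{−A} p_t(x,y) > 0` for a
suitable finite constant `A`. -/
theorem feynman_kac_kernel_positive
    (d : ℕ) (hd : 1 ≤ d) (t : ℝ) (ht : 0 < t)
    (x y : EuclideanSpace ℝ (Fin d))
    (V : EuclideanSpace ℝ (Fin d) → ℝ) (hVmeas : Measurable V) (hVpos : ∀ z, 0 ≤ V z)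
    (hVloc : LocallyIntegrable V volume)
    (hconv : (∫⁻ z, ENNReal.ofReal (V z) * ENNReal.ofReal (GammaKer d t x z)) +
        (∫⁻ z, ENNReal.ofReal (V z) * ENNReal.ofReal (GammaKer d t y z)) < ⊤)
    {Ω : Type*} [MeasurableSpace Ω] (μ : Measure Ω) [IsFiniteMeasure μ]
    (e : ℝ → Ω → EuclideanSpace ℝ (Fin d))
    (hemeas : Measurable fun p : ℝ × Ω => e p.1 p.2)
    (hmass : μ Set.univ = ENNReal.ofReal (heatKernel d t x y))
    (hmarg : ∀ s : ℝ, 0 < s → s < t →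
      ∀ A : Set (EuclideanSpace ℝ (Fin d)), MeasurableSet A →
        μ {ω | e s ω ∈ A}
          = ∫⁻ z in A, ENNReal.ofReal (heatKernel d s x z * heatKernel d (t - s) z y)) :
    ∃ A : ℝ,
      ENNReal.ofReal ((1 / 2) * Real.exp (-A) * heatKernel d t x y)
          ≤ ∫⁻ ω, expNeg (∫⁻ s in Set.Ioc (0 : ℝ) t, ENNReal.ofReal (V (e s ω))) ∂μ ∧
      0 < ∫⁻ ω, expNeg (∫⁻ s in Set.Ioc (0 : ℝ) t, ENNReal.ofReal (V (e s ω))) ∂μ :=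
  feynman_kac_kernel_positive_general d hd t ht x y V hVmeas hconv μ e hemeas hmass hmarg
end
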